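/- Let 1 ≤ p ≤ r be integers such that [r]^(p) has the fixed intersection property, let e be an r-element set, and for each p-subset A ⊆ e choose a p-set I_A ⊆ [r]. If the sets I_A are not all equal, then there is a bijection σ : e → [r] (an ordering of e) such that for every p-subset A ⊆ e, σ(A) ≠ I_A. -/

import Mathlib

/-- `[r]^(p)` has the fixed intersection property. -/
def FixedIntersectionProperty (r p : ℕ) : Prop :=
  ∀ f : Finset ℕ → Finset ℕ,
    (∀ x : Finset ℕ, x ⊆ Finset.Icc 1 r → x.card = p →
      f x ⊆ Finset.Icc 1 r ∧ (f x).card = p) →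
    (∃ x y : Finset ℕ, x ⊆ Finset.Icc 1 r ∧ x.card = p ∧
      y ⊆ Finset.Icc 1 r ∧ y.card = p ∧ f x ≠ f y) →
    ∃ x y : Finset ℕ, x ⊆ Finset.Icc 1 r ∧ x.card = p ∧
      y ⊆ Finset.Icc 1 r ∧ y.card = p ∧ x ≠ y ∧
      (f x ∩ f y).card = (x ∩ y).card

/-!
Double counting over the bijections `σ : e → [r]`. The number of `σ` with `σ(A) = z` is the
same for all `p`-sets `A ⊆ e` and `z ⊆ [r]`, so `∑_A #{σ | σ(A) = I_A}` equals the number of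
bijections: on average a bijection hits exactly one `A`. If every bijection hit some `A`, each
would hit exactly one. But the fixed intersection property, transported to `e`, gives `A ≠ B`
with `|I_A ∩ I_B| = |A ∩ B|`, and then a single bijection maps `A` onto `I_A` and `B` onto `I_B`.
-/

open Finset Function

namespace Equiv

section

variable {α β : Type*} [Fintype α] [Fintype β] [DecidableEq α] [DecidableEq β]

lemma exists_map_eq_map_eq (h : Fintype.card α = Fintype.card β) {x y : Finset α}
    {x' y' : Finset β} (hx : #x = #x') (hy : #y = #y') (hxy : #(x ∩ y) = #(x' ∩ y')) :
    ∃ E : α ≃ β, x.map E.toEmbedding = x' ∧ y.map E.toEmbedding = y' := by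
  -- `E` is glued from bijections between corresponding Venn regions of `(x, y)` and `(x', y')`.
  set φ : α → Bool × Bool := fun a => (a ∈ x, a ∈ y)
  set ψ : β → Bool × Bool := fun b => (b ∈ x', b ∈ y')
  have hfiber : ∀ c, Fintype.card {a // φ a = c} = Fintype.card {b // ψ b = c} := by
    have hu := card_union_add_card_inter x y
    have hu' := card_union_add_card_inter x' y'
    rintro ⟨_ | _, _ | _⟩ <;>
      simp only [φ, ψ, Fintype.card_subtype, Prod.mk.injEq, decide_eq_true_eq,
        decide_eq_false_iff_not]
    · calc _ = #(x ∪ y)ᶜ := by congr 1; ext; simp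
        _ = #(x' ∪ y')ᶜ := by rw [card_compl, card_compl]; omega
        _ = _ := by congr 1; ext; simp
    · calc _ = #(y \ x) := by congr 1; ext; simp [and_comm]
        _ = #(y' \ x') := by rw [card_sdiff, card_sdiff, hxy, hy]
        _ = _ := by congr 1; ext; simp [and_comm]
    · calc _ = #(x \ y) := by congr 1; ext; simp
        _ = #(x' \ y') := by rw [card_sdiff, card_sdiff, inter_comm y, inter_comm y', hxy, hx]
        _ = _ := by congr 1; ext; simp
    · simp only [filter_and, filter_mem_eq_inter, univ_inter, hxy]
  obtain ⟨E, hE⟩ : ∃ E : α ≃ β, ∀ a, ψ (E a) = φ a :=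
    ⟨ofFiberEquiv fun c => Fintype.equivOfCardEq (hfiber c), ofFiberEquiv_map _⟩
  have hmem : ∀ b, (b ∈ x' ↔ E.symm b ∈ x) ∧ (b ∈ y' ↔ E.symm b ∈ y) := fun b => by
    simpa [φ, ψ] using hE (E.symm b)
  exact ⟨E, by ext b; simp [mem_map_equiv, (hmem b).1],
    by ext b; simp [mem_map_equiv, (hmem b).2]⟩

lemma card_filter_map_eq_of_card_eq {x x' : Finset α} {z z' : Finset β} (hx : #x = #x')
    (hz : #z = #z') :
    #{E : α ≃ β | x.map E.toEmbedding = z} = #{E : α ≃ β | x'.map E.toEmbedding = z'} := by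
  obtain ⟨π, hπ, -⟩ := exists_map_eq_map_eq rfl hx hx (by simp [hx])
  obtain ⟨ρ, hρ, -⟩ := exists_map_eq_map_eq rfl hz hz (by simp [hz])
  refine card_equiv (π.equivCongr ρ) fun E => ?_
  have hcomp : π.toEmbedding.trans (π.equivCongr ρ E).toEmbedding =
      E.toEmbedding.trans ρ.toEmbedding := by ext; simp
  simp only [mem_filter, mem_univ, true_and]
  rw [← hπ, ← hρ, map_map, hcomp, ← map_map, map_inj]

lemma sum_card_filter_map_eq_card (h : Fintype.card α = Fintype.card β) {p : ℕ}
    (hp : p ≤ Fintype.card α) {F : Finset α → Finset β} (hF : ∀ x, #x = p → #(F x) = p) :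
    ∑ x ∈ powersetCard p univ, #{E : α ≃ β | x.map E.toEmbedding = F x} =
      Fintype.card (α ≃ β) := by
  obtain ⟨x₀, -, hx₀⟩ := exists_subset_card_eq (s := (univ : Finset α)) hp
  set N := #{E : α ≃ β | x₀.map E.toEmbedding = F x₀}
  have hmaps : ∀ E : α ≃ β, x₀.map E.toEmbedding ∈ powersetCard p (univ : Finset β) := fun E =>
    mem_powersetCard.2 ⟨subset_univ _, by rw [card_map, hx₀]⟩
  calc ∑ x ∈ powersetCard p univ, #{E : α ≃ β | x.map E.toEmbedding = F x}
      = ∑ _x ∈ powersetCard p (univ : Finset α), N := sum_congr rfl fun x hx =>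
        card_filter_map_eq_of_card_eq ((mem_powersetCard.1 hx).2.trans hx₀.symm)
          ((hF x (mem_powersetCard.1 hx).2).trans (hF x₀ hx₀).symm)
    _ = ∑ _w ∈ powersetCard p (univ : Finset β), N := by simp [h]
    _ = ∑ w ∈ powersetCard p univ, #{E : α ≃ β | x₀.map E.toEmbedding = w} :=
        sum_congr rfl fun w hw => card_filter_map_eq_of_card_eq rfl
          ((hF x₀ hx₀).trans (mem_powersetCard.1 hw).2.symm)
    _ = Fintype.card (α ≃ β) := by
        rw [← card_univ, card_eq_sum_card_fiberwise fun E _ => hmaps E]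

theorem exists_forall_map_ne (h : Fintype.card α = Fintype.card β) {p : ℕ}
    {F : Finset α → Finset β} (hF : ∀ x, #x = p → #(F x) = p) {x y : Finset α} (hx : #x = p)
    (hy : #y = p) (hxy : x ≠ y) (hinter : #(F x ∩ F y) = #(x ∩ y)) :
    ∃ E : α ≃ β, ∀ z, #z = p → z.map E.toEmbedding ≠ F z := by
  by_contra! hcon
  set P := powersetCard p (univ : Finset α)
  have hP : ∀ z, #z = p → z ∈ P := fun z hz => mem_powersetCard.2 ⟨subset_univ z, hz⟩
  set hits : (α ≃ β) → ℕ := fun E => #{z ∈ P | z.map E.toEmbedding = F z}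
  have hhits : ∀ E, 1 ≤ hits E := fun E => by
    obtain ⟨z, hz, hzE⟩ := hcon E
    exact one_le_card.2 ⟨z, mem_filter.2 ⟨hP z hz, hzE⟩⟩
  obtain ⟨E₀, hE₀x, hE₀y⟩ := exists_map_eq_map_eq h (hx.trans (hF x hx).symm)
    (hy.trans (hF y hy).symm) hinter.symm
  have hE₀ : 1 < hits E₀ :=
    one_lt_card.2 ⟨x, mem_filter.2 ⟨hP x hx, hE₀x⟩, y, mem_filter.2 ⟨hP y hy, hE₀y⟩, hxy⟩
  have hcount : ∑ E, hits E = Fintype.card (α ≃ β) := by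
    rw [← sum_card_filter_map_eq_card h (hx ▸ card_le_univ x) hF]
    simp only [hits, card_filter]
    exact sum_comm
  have : Fintype.card (α ≃ β) < ∑ E, hits E := calc
    Fintype.card (α ≃ β) = ∑ _E : α ≃ β, 1 := by simp
    _ < ∑ E, hits E := sum_lt_sum (fun E _ => hhits E) ⟨E₀, mem_univ _, hE₀⟩
  omega

end

section

variable {γ : Type*} [DecidableEq γ] {u v : Finset γ}

def extendById (E : u ≃ v) (a : γ) : γ := if h : a ∈ u then E ⟨a, h⟩ else a

lemma extendById_of_mem (E : u ≃ v) {a : γ} (ha : a ∈ u) : E.extendById a = E ⟨a, ha⟩ :=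
  dif_pos ha

lemma injOn_extendById (E : u ≃ v) : Set.InjOn E.extendById u := fun a ha b hb hab => by
  rw [extendById_of_mem E ha, extendById_of_mem E hb] at hab
  simpa using E.injective (Subtype.ext hab)

lemma image_map_subtype_extendById (E : u ≃ v) (x : Finset u) :
    (x.map (Embedding.subtype _)).image E.extendById =
      (x.map E.toEmbedding).map (Embedding.subtype _) := by
  ext b
  simp only [mem_image, mem_map, Embedding.subtype_apply, toEmbedding_apply]
  constructor
  · rintro ⟨_, ⟨a, ha, rfl⟩, rfl⟩
    exact ⟨E a, ⟨a, ha, rfl⟩, (extendById_of_mem E a.2).symm⟩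
  · rintro ⟨_, ⟨a, ha, rfl⟩, rfl⟩
    exact ⟨a, ⟨a, ha, rfl⟩, extendById_of_mem E a.2⟩

lemma image_extendById_self (E : u ≃ v) : u.image E.extendById = v := by
  have := image_map_subtype_extendById E univ
  rwa [map_univ_equiv, univ_eq_attach, univ_eq_attach, attach_map_val, attach_map_val] at this

end

end Equiv

theorem Finset.exists_injOn_image_ne {γ : Type*} [DecidableEq γ] {u v : Finset γ}
    (huv : #u = #v) {p : ℕ} {I : Finset γ → Finset γ}
    (hI : ∀ A ⊆ u, #A = p → I A ⊆ v ∧ #(I A) = p) {A B : Finset γ} (hA : A ⊆ u) (hAc : #A = p)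
    (hB : B ⊆ u) (hBc : #B = p) (hAB : A ≠ B) (hinter : #(I A ∩ I B) = #(A ∩ B)) :
    ∃ σ : γ → γ, Set.InjOn σ u ∧ u.image σ = v ∧ ∀ C ⊆ u, #C = p → C.image σ ≠ I C := by
  have hsub : ∀ x : Finset u, x.map (Embedding.subtype _) ⊆ u := fun x _ ha =>
    property_of_mem_map_subtype x ha
  have hlift : ∀ C ⊆ u, ∃ x : Finset u, x.map (Embedding.subtype _) = C := fun C hC =>
    ⟨C.subtype (· ∈ u), subtype_map_of_mem fun _ ha => hC ha⟩
  set F : Finset u → Finset v := fun x => (I (x.map (Embedding.subtype _))).subtype (· ∈ v)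
  have hIsub : ∀ x : Finset u, #x = p →
      I (x.map (Embedding.subtype _)) ⊆ v ∧ #(I (x.map (Embedding.subtype _))) = p :=
    fun x hx => hI _ (hsub x) (by rw [card_map, hx])
  have hFmap : ∀ x, #x = p → (F x).map (Embedding.subtype _) = I (x.map (Embedding.subtype _)) :=
    fun x hx => subtype_map_of_mem fun _ hb => (hIsub x hx).1 hb
  have hFc : ∀ x, #x = p → #(F x) = p := fun x hx => by
    rw [← card_map (Embedding.subtype _), hFmap x hx, (hIsub x hx).2]
  obtain ⟨x, rfl⟩ := hlift A hA
  obtain ⟨y, rfl⟩ := hlift B hB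
  rw [card_map] at hAc hBc
  have hFxy : #(F x ∩ F y) = #(x ∩ y) := by
    rw [← card_map (Embedding.subtype _), map_inter, hFmap x hAc, hFmap y hBc, hinter,
      ← map_inter, card_map]
  obtain ⟨E, hE⟩ := Equiv.exists_forall_map_ne (by simpa using huv) hFc hAc hBc
    (fun h => hAB (congrArg _ h)) hFxy
  refine ⟨E.extendById, E.injOn_extendById, E.image_extendById_self, fun C hC hCc heq => ?_⟩
  obtain ⟨z, rfl⟩ := hlift C hC
  rw [card_map] at hCc
  apply hE z hCc
  apply map_injective (Embedding.subtype _)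
  rw [← Equiv.image_map_subtype_extendById, hFmap z hCc, heq]

theorem FixedIntersectionProperty.exists_ne_card_inter_eq {r p : ℕ}
    (hfip : FixedIntersectionProperty r p) {e : Finset ℕ} (he : #e = r)
    {I : Finset ℕ → Finset ℕ} (hI : ∀ A ⊆ e, #A = p → I A ⊆ Icc 1 r ∧ #(I A) = p)
    (hne : ∃ A B, A ⊆ e ∧ #A = p ∧ B ⊆ e ∧ #B = p ∧ I A ≠ I B) :
    ∃ A B, A ⊆ e ∧ #A = p ∧ B ⊆ e ∧ #B = p ∧ A ≠ B ∧ #(I A ∩ I B) = #(A ∩ B) := by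
  set τ := (equivOfCardEq (s := Icc 1 r) (t := e) (by simp [he])).extendById
  have hτ : Set.InjOn τ (Icc 1 r) := Equiv.injOn_extendById _
  have hτe : (Icc 1 r).image τ = e := Equiv.image_extendById_self _
  have himg : ∀ z ⊆ Icc 1 r, #z = p → z.image τ ⊆ e ∧ #(z.image τ) = p := fun z hz hzc =>
    ⟨hτe ▸ image_subset_image hz, (card_image_of_injOn (hτ.mono hz)).trans hzc⟩
  have hpre : ∀ A ⊆ e, #A = p → ∃ z ⊆ Icc 1 r, #z = p ∧ z.image τ = A := fun A hA hAc => by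
    obtain ⟨z, hz, rfl⟩ := subset_image_iff.1 (hτe ▸ hA)
    exact ⟨z, hz, (card_image_of_injOn (hτ.mono hz)).symm.trans hAc, rfl⟩
  obtain ⟨x, y, hx, hxc, hy, hyc, hxy, hcard⟩ :=
    hfip (fun z => I (z.image τ)) (fun z hz hzc => hI _ (himg z hz hzc).1 (himg z hz hzc).2) <| by
      obtain ⟨A, B, hA, hAc, hB, hBc, hAB⟩ := hne
      obtain ⟨zA, hzA, hzAc, rfl⟩ := hpre A hA hAc
      obtain ⟨zB, hzB, hzBc, rfl⟩ := hpre B hB hBc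
      exact ⟨zA, zB, hzA, hzAc, hzB, hzBc, hAB⟩
  refine ⟨x.image τ, y.image τ, (himg x hx hxc).1, (himg x hx hxc).2, (himg y hy hyc).1,
    (himg y hy hyc).2, fun h => hxy ((image_eq_image_iff_of_injOn hτ hx hy).1 h), ?_⟩
  rw [← image_inter_of_injOn x y (hτ.mono (Set.union_subset (coe_subset.2 hx) (coe_subset.2 hy))),
    card_image_of_injOn (hτ.mono (inter_subset_left.trans hx))]
  exact hcard

theorem stmt_7_general (r p : ℕ)
    (hfip : FixedIntersectionProperty r p)
    (e : Finset ℕ) (he : e.card = r)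
    (I : Finset ℕ → Finset ℕ)
    (hI : ∀ A : Finset ℕ, A ⊆ e → A.card = p → I A ⊆ Finset.Icc 1 r ∧ (I A).card = p)
    (hne : ∃ A B : Finset ℕ, A ⊆ e ∧ A.card = p ∧ B ⊆ e ∧ B.card = p ∧ I A ≠ I B) :
    ∃ σ : ℕ → ℕ, Set.InjOn σ ↑e ∧ Finset.image σ e = Finset.Icc 1 r ∧
      ∀ A : Finset ℕ, A ⊆ e → A.card = p → Finset.image σ A ≠ I A := by
  obtain ⟨A, B, hA, hAc, hB, hBc, hAB, hinter⟩ := hfip.exists_ne_card_inter_eq he hI hne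
  exact exists_injOn_image_ne (by simp [he]) hI hA hAc hB hBc hAB hinter

theorem stmt_7 (r p : ℕ) (hp : 1 ≤ p) (hpr : p ≤ r)
    (hfip : FixedIntersectionProperty r p)
    (e : Finset ℕ) (he : e.card = r)
    (I : Finset ℕ → Finset ℕ)
    (hI : ∀ A : Finset ℕ, A ⊆ e → A.card = p → I A ⊆ Finset.Icc 1 r ∧ (I A).card = p)
    (hne : ∃ A B : Finset ℕ, A ⊆ e ∧ A.card = p ∧ B ⊆ e ∧ B.card = p ∧ I A ≠ I B) :
    ∃ σ : ℕ → ℕ, Set.InjOn σ ↑e ∧ Finset.image σ e = Finset.Icc 1 r ∧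
      ∀ A : Finset ℕ, A ⊆ e → A.card = p → Finset.image σ A ≠ I A :=
  stmt_7_general r p hfip e he I hI hne
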